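/- Let F_q be a finite field, χ a multiplicative character of order q−1 extended by χ(0)=0, d ≥ 2, and H ⊂ F_q^d an affine subvariety of dimension r given by equations ω_k(z) = 0 for r+1 ≤ k ≤ d, where ω_k(z) = −Σ_{j=1}^r α_{kj} z_j + z_k − α_k. For (a_1,…,a_d) ∈ ℤ^d define J_H^{(a)} = Σ_{z ∈ H} χ^{a_1}(z_1)⋯χ^{a_d}(z_d). Then (q−1)^{r(d−r−1)} J_H^{(a)} = Σ [ J_{ω_{r+1}}^{(i_1^{r+2}+⋯+i_1^d+a_1, …, i_r^{r+2}+⋯+i_r^d+a_r, a_{r+1})} · ∏_{k=r+2}^d J_{ω_k}^{(−i_1^k,…,−i_r^k, a_k)} ], where the sum is over all tuples (i_s^k)_{1≤s≤r, r+2≤k≤d} with 0 ≤ i_s^k ≤ q−2, and J_ω^{(b_1,…,b_r,c)} = Σ_{z: ω(z_1,…,z_r,w)=0, w the extra variable} χ^{b_1}(z_1)⋯χ^{b_r}(z_r)χ^{c}(w) (the partial Jacobi sum of the linear form ω over F_q^{r+1}). -/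
import Mathlib


open Finset

/-- `χ^i(z)` with the convention `χ^i(0) = 0`. -/
noncomputable def jp {F : Type*} [DecidableEq F] [Zero F] (χ : F → ℂ) (i : ℤ) (z : F) : ℂ :=
  if z = 0 then 0 else χ z ^ i

/-- The partial Jacobi sum `J_ω^{(b₁,…,b_r,c)}` of the linear form
`ω(z₁,…,z_r,w) = −∑_j A_j z_j + w − c₀`, i.e. the sum over its zero locus
(the graph `w = ∑_j A_j z_j + c₀`) of `χ^{b₁}(z₁)⋯χ^{b_r}(z_r) χ^c(w)`. -/
noncomputable def Jom {F : Type*} [Field F] [Fintype F] [DecidableEq F]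
    (χ : F → ℂ) {r : ℕ} (A : Fin r → F) (c₀ : F) (b : Fin r → ℤ) (c : ℤ) : ℂ :=
  ∑ z : Fin r → F, (∏ j, jp χ (b j) (z j)) * jp χ c (∑ j, A j * z j + c₀)

/- ------------------- auxiliary lemmas ------------------- -/

lemma zpow_sum' {u : ℂ} (hu : u ≠ 0) {α : Type*} (t : Finset α) (b : α → ℤ) :
    u ^ (∑ k ∈ t, b k) = ∏ k ∈ t, u ^ b k := by
  induction t using Finset.cons_induction with
  | empty => simp
  | cons x t hx ih => rw [Finset.sum_cons, Finset.prod_cons, zpow_add₀ hu, ih]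

lemma jp_sum_add {F : Type*} [DecidableEq F] [Zero F] {χ : F → ℂ}
    (hne : ∀ z : F, z ≠ 0 → χ z ≠ 0) (z : F) {α : Type*} (t : Finset α)
    (b : α → ℤ) (c : ℤ) :
    jp χ (∑ k ∈ t, b k + c) z = (∏ k ∈ t, jp χ (b k) z) * jp χ c z := by
  by_cases hz : z = 0
  · simp [jp, hz]
  · simp only [jp, if_neg hz]
    rw [zpow_add₀ (hne z hz), zpow_sum' (hne z hz)]

lemma prod_ite_zero {α : Type*} (s : Finset α) (p : α → Prop) [DecidablePred p] (c : ℂ) :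
    (∏ x ∈ s, if p x then c else 0) = if ∀ x ∈ s, p x then c ^ s.card else 0 := by
  by_cases h : ∀ x ∈ s, p x
  · rw [if_pos h, Finset.prod_congr rfl fun x hx => if_pos (h x hx), Finset.prod_const]
  · push_neg at h
    obtain ⟨x, hx, hpx⟩ := h
    rw [if_neg (by push_neg; exact ⟨x, hx, hpx⟩)]
    exact Finset.prod_eq_zero hx (if_neg hpx)

lemma prod_sum_comm {ι : Type*} [Fintype ι] [DecidableEq ι] {V : Type*} [Fintype V]
    [DecidableEq V] (f : ι → V → ℂ) :
    ∏ k : ι, ∑ z : V, f k z = ∑ Z : ι → V, ∏ k, f k (Z k) := by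
  rw [Finset.prod_univ_sum]
  simp

lemma prod_split {M : Type*} [CommMonoid M] {m n : ℕ} (h : m = n + 1) (g : Fin m → M) :
    ∏ k, g k = g ⟨0, by omega⟩ * ∏ k : Fin n, g ⟨k.val + 1, by omega⟩ := by
  subst h
  rw [Fin.prod_univ_succ]
  rfl

/-- for the `r`-dimensional affine subvariety
`H = {z ∈ F_q^d : z_k = ∑_j α_{kj} z_j + α_k, r+1 ≤ k ≤ d}`,
`(q−1)^{r(d−r−1)} J_H^{(a)}` equals the sum over all tuples
`0 ≤ i_s^k ≤ q−2` of products
`J_{ω_{r+1}}^{(∑_k i₁^k + a₁, …, ∑_k i_r^k + a_r, a_{r+1})} ∏_{k=r+2}^d J_{ω_k}^{(−i₁^k,…,−i_r^k,a_k)}`. -/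
theorem stmt_14 {F : Type*} [Field F] [Fintype F] [DecidableEq F] (q d r : ℕ)
    (hq : Fintype.card F = q) (hd : 2 ≤ d) (hrd : r + 1 ≤ d) (χ : F → ℂ)
    (hχ0 : χ 0 = 0)
    (hmul : ∀ a b : F, a ≠ 0 → b ≠ 0 → χ (a * b) = χ a * χ b)
    (hord : ∀ z : F, z ≠ 0 → χ z ^ (q - 1) = 1)
    (hinj : ∀ a b : F, a ≠ 0 → b ≠ 0 → χ a = χ b → a = b)
    (A : Fin (d - r) → Fin r → F) (c₀ : Fin (d - r) → F)
    (a : Fin d → ℤ) :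
    let er : Fin r → Fin d := fun j => ⟨j.val, by omega⟩
    let ek : Fin (d - r) → Fin d := fun k => ⟨r + k.val, by omega⟩
    let JH : ℂ := ∑ z : Fin d → F,
      (if ∀ k : Fin (d - r), z (ek k) = ∑ j, A k j * z (er j) + c₀ k then
        ∏ i : Fin d, jp χ (a i) (z i) else 0)
    ((q : ℂ) - 1) ^ (r * (d - r - 1)) * JH =
      ∑ I : Fin (d - r - 1) → Fin r → Fin (q - 1),
        Jom χ (A ⟨0, by omega⟩) (c₀ ⟨0, by omega⟩)
            (fun s => (∑ k : Fin (d - r - 1), ((I k s : ℤ))) + a (er s))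
            (a (ek ⟨0, by omega⟩)) *
          ∏ k : Fin (d - r - 1),
            Jom χ (A ⟨k.val + 1, by omega⟩) (c₀ ⟨k.val + 1, by omega⟩)
              (fun s => -(I k s : ℤ)) (a (ek ⟨k.val + 1, by omega⟩)) := by
  intro er ek JH
  -- basic facts
  have hq2 : 2 ≤ q := hq ▸ Fintype.one_lt_card
  have hne : ∀ z : F, z ≠ 0 → χ z ≠ 0 := by
    intro z hz h0
    have h1 := hord z hz
    rw [h0, zero_pow (by omega : q - 1 ≠ 0)] at h1
    exact zero_ne_one h1
  have hχ1 : χ 1 = 1 := by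
    have h1 : (1 : F) ≠ 0 := one_ne_zero
    have := hmul 1 1 h1 h1
    rw [one_mul] at this
    exact (mul_right_cancel₀ (hne 1 h1) (by rw [← this, one_mul])).symm
  -- orthogonality
  have horth : ∀ z t : F, (∑ i : Fin (q - 1), jp χ (i : ℤ) z * jp χ (-(i : ℤ)) t) =
      if z = t ∧ z ≠ 0 then ((q : ℂ) - 1) else 0 := by
    intro z t
    by_cases hz : z = 0
    · simp [jp, hz]
    by_cases ht : t = 0
    · have : ¬(z = t ∧ z ≠ 0) := fun h => hz (h.1.trans ht)
      simp [jp, ht, this]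
    have hterm : ∀ i : Fin (q - 1), jp χ (i : ℤ) z * jp χ (-(i : ℤ)) t
        = (χ z / χ t) ^ (i : ℕ) := by
      intro i
      simp only [jp, if_neg hz, if_neg ht]
      rw [zpow_neg, zpow_natCast, zpow_natCast, div_pow, div_eq_mul_inv]
    rw [Finset.sum_congr rfl fun i _ => hterm i]
    rw [Fin.sum_univ_eq_sum_range (fun i => (χ z / χ t) ^ i) (q - 1)]
    by_cases hzt : z = t
    · subst hzt
      rw [div_self (hne z hz)]
      simp only [one_pow, Finset.sum_const, Finset.card_range, nsmul_eq_mul, mul_one]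
      rw [if_pos (⟨trivial, hz⟩ : True ∧ z ≠ 0), Nat.cast_sub (by omega), Nat.cast_one]
    · have hu1 : χ z / χ t ≠ 1 := by
        intro h
        rw [div_eq_one_iff_eq (hne t ht)] at h
        exact hzt (hinj z t hz ht h)
      rw [geom_sum_eq hu1, div_pow, hord z hz, hord t ht, div_one, sub_self, zero_div,
        if_neg (fun h => hzt h.1)]
  -- notation
  have hmn : d - r = (d - r - 1) + 1 := by omega
  set L : Fin (d - r) → (Fin r → F) → F := fun k u => ∑ j, A k j * u j + c₀ k with hL
  set C₀ : (Fin r → F) → ℂ := fun u =>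
    (∏ s, jp χ (a (er s)) (u s)) * jp χ (a (ek ⟨0, by omega⟩)) (L ⟨0, by omega⟩ u) with hC₀
  set D : Fin (d - r - 1) → (Fin r → F) → ℂ := fun k u =>
    jp χ (a (ek ⟨k.val + 1, by omega⟩)) (L ⟨k.val + 1, by omega⟩ u) with hD
  -- Step 1: JH as a sum over the free coordinates
  have hJH : JH = ∑ u : Fin r → F, (∏ s, jp χ (a (er s)) (u s)) *
      ∏ k : Fin (d - r), jp χ (a (ek k)) (L k u) := by
    have hrdle : r + (d - r) = d := by omega
    set e : Fin r ⊕ Fin (d - r) ≃ Fin d := finSumFinEquiv.trans (finCongr hrdle) with he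
    have hel : ∀ s : Fin r, e (Sum.inl s) = er s := by
      intro s; ext; simp [he, er]
    have herk : ∀ k : Fin (d - r), e (Sum.inr k) = ek k := by
      intro k; ext; simp [he, ek]
    set Φ : ((Fin r → F) × (Fin (d - r) → F)) ≃ (Fin d → F) :=
      (Equiv.sumArrowEquivProdArrow (Fin r) (Fin (d - r)) F).symm.trans
        (Equiv.arrowCongr e (Equiv.refl F)) with hΦ
    have hΦ1 : ∀ (u : Fin r → F) (v : Fin (d - r) → F) (s : Fin r), Φ (u, v) (er s) = u s := by
      intro u v s
      simp only [hΦ, Equiv.trans_apply, Equiv.arrowCongr_apply, Equiv.refl_apply,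
        Function.comp_apply, ← hel s, Equiv.symm_apply_apply]
      rfl
    have hΦ2 : ∀ (u : Fin r → F) (v : Fin (d - r) → F) (k : Fin (d - r)), Φ (u, v) (ek k) = v k := by
      intro u v k
      simp only [hΦ, Equiv.trans_apply, Equiv.arrowCongr_apply, Equiv.refl_apply,
        Function.comp_apply, ← herk k, Equiv.symm_apply_apply]
      rfl
    show (∑ z : Fin d → F, _) = _
    rw [← Equiv.sum_comp Φ, Fintype.sum_prod_type]
    refine Finset.sum_congr rfl fun u _ => ?_
    have hcond : ∀ v : Fin (d - r) → F,
        (∀ k : Fin (d - r), Φ (u, v) (ek k) = ∑ j, A k j * Φ (u, v) (er j) + c₀ k) ↔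
          v = fun k => L k u := by
      intro v
      rw [funext_iff]
      refine forall_congr' fun k => ?_
      rw [hΦ2]
      simp only [hΦ1, hL]
    have hprod : ∀ v : Fin (d - r) → F, (∏ i : Fin d, jp χ (a i) (Φ (u, v) i)) =
        (∏ s, jp χ (a (er s)) (u s)) * ∏ k : Fin (d - r), jp χ (a (ek k)) (v k) := by
      intro v
      rw [← Equiv.prod_comp e, Fintype.prod_sum_type]
      congr 1
      · exact Finset.prod_congr rfl fun s _ => by rw [hel, hΦ1]
      · exact Finset.prod_congr rfl fun k _ => by rw [herk, hΦ2]
    calc (∑ v : Fin (d - r) → F, if ∀ k : Fin (d - r), Φ (u, v) (ek k) =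
            ∑ j, A k j * Φ (u, v) (er j) + c₀ k then ∏ i : Fin d, jp χ (a i) (Φ (u, v) i) else 0)
        = ∑ v : Fin (d - r) → F, if v = (fun k => L k u) then
            (∏ s, jp χ (a (er s)) (u s)) * ∏ k : Fin (d - r), jp χ (a (ek k)) (v k) else 0 := by
          refine Finset.sum_congr rfl fun v _ => ?_
          rw [if_congr (hcond v) (hprod v) rfl]
      _ = (∏ s, jp χ (a (er s)) (u s)) * ∏ k : Fin (d - r), jp χ (a (ek k)) (L k u) := by
          rw [Finset.sum_ite_eq' Finset.univ (fun k => L k u)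
            (fun v => (∏ s, jp χ (a (er s)) (u s)) * ∏ k : Fin (d - r), jp χ (a (ek k)) (v k))]
          simp
  -- Step 2: collapse the inner sums of the RHS
  have inner : ∀ u : Fin r → F,
      (∑ Z : Fin (d - r - 1) → Fin r → F, ∑ I : Fin (d - r - 1) → Fin r → Fin (q - 1),
        ((∏ s, jp χ ((∑ k : Fin (d - r - 1), ((I k s : ℤ))) + a (er s)) (u s)) *
            jp χ (a (ek ⟨0, by omega⟩)) (L ⟨0, by omega⟩ u)) *
          ∏ k : Fin (d - r - 1), (∏ s, jp χ (-(I k s : ℤ)) (Z k s)) * D k (Z k)) =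
      C₀ u * (((q : ℂ) - 1) ^ (r * (d - r - 1)) * ∏ k : Fin (d - r - 1), D k u) := by
    intro u
    have hA : ∀ (Z : Fin (d - r - 1) → Fin r → F) (I : Fin (d - r - 1) → Fin r → Fin (q - 1)),
        ((∏ s, jp χ ((∑ k : Fin (d - r - 1), ((I k s : ℤ))) + a (er s)) (u s)) *
            jp χ (a (ek ⟨0, by omega⟩)) (L ⟨0, by omega⟩ u)) *
          ∏ k : Fin (d - r - 1), (∏ s, jp χ (-(I k s : ℤ)) (Z k s)) * D k (Z k) =
        (C₀ u * ∏ k : Fin (d - r - 1), D k (Z k)) *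
          ∏ k : Fin (d - r - 1), ∏ s,
            (jp χ ((I k s : ℤ)) (u s) * jp χ (-(I k s : ℤ)) (Z k s)) := by
      intro Z I
      rw [Finset.prod_congr rfl fun s (_ : s ∈ Finset.univ) =>
        jp_sum_add hne (u s) Finset.univ (fun k : Fin (d - r - 1) => ((I k s : ℤ))) (a (er s))]
      rw [Finset.prod_mul_distrib, Finset.prod_mul_distrib]
      rw [Finset.prod_comm (f := fun (s : Fin r) (k : Fin (d - r - 1)) => jp χ ((I k s : ℤ)) (u s))]
      conv_rhs => rw [Finset.prod_congr rfl fun (k : Fin (d - r - 1)) (_ : k ∈ Finset.univ) =>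
        (Finset.prod_mul_distrib (s := Finset.univ)
          (f := fun s : Fin r => jp χ ((I k s : ℤ)) (u s))
          (g := fun s : Fin r => jp χ (-(I k s : ℤ)) (Z k s))), Finset.prod_mul_distrib]
      rw [hC₀]
      ring
    rw [Finset.sum_congr rfl fun Z _ => Finset.sum_congr rfl fun I _ => hA Z I]
    have hB : ∀ Z : Fin (d - r - 1) → Fin r → F,
        (∑ I : Fin (d - r - 1) → Fin r → Fin (q - 1),
          ∏ k : Fin (d - r - 1), ∏ s,
            (jp χ ((I k s : ℤ)) (u s) * jp χ (-(I k s : ℤ)) (Z k s))) =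
        ∏ k : Fin (d - r - 1), (if ∀ s : Fin r, u s = Z k s ∧ u s ≠ 0
            then ((q : ℂ) - 1) ^ r else 0) := by
      intro Z
      rw [← prod_sum_comm (fun (k : Fin (d - r - 1)) (g : Fin r → Fin (q - 1)) =>
        ∏ s, (jp χ ((g s : ℤ)) (u s) * jp χ (-(g s : ℤ)) (Z k s)))]
      refine Finset.prod_congr rfl fun k _ => ?_
      rw [← prod_sum_comm (fun (s : Fin r) (i : Fin (q - 1)) =>
        jp χ ((i : ℤ)) (u s) * jp χ (-(i : ℤ)) (Z k s))]
      rw [Finset.prod_congr rfl fun s (_ : s ∈ Finset.univ) => horth (u s) (Z k s)]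
      rw [prod_ite_zero Finset.univ (fun s => u s = Z k s ∧ u s ≠ 0) ((q : ℂ) - 1)]
      simp
    rw [Finset.sum_congr rfl fun Z _ => by
      rw [← Finset.mul_sum, hB Z, mul_assoc, ← Finset.prod_mul_distrib]]
    rw [← Finset.mul_sum]
    rw [← prod_sum_comm (fun (k : Fin (d - r - 1)) (z : Fin r → F) =>
      D k z * if ∀ s : Fin r, u s = z s ∧ u s ≠ 0 then ((q : ℂ) - 1) ^ r else 0)]
    by_cases hN : ∀ s : Fin r, u s ≠ 0
    · have hcond : ∀ z : Fin r → F, (∀ s, u s = z s ∧ u s ≠ 0) ↔ z = u :=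
        fun z => ⟨fun h => funext fun s => ((h s).1).symm, fun h => by subst h; exact fun s => ⟨rfl, hN s⟩⟩
      have hZ : ∀ k : Fin (d - r - 1),
          (∑ z : Fin r → F, (D k z * if ∀ s : Fin r, u s = z s ∧ u s ≠ 0
            then ((q : ℂ) - 1) ^ r else 0)) = D k u * ((q : ℂ) - 1) ^ r := by
        intro k
        rw [Finset.sum_congr rfl fun z _ => by
          rw [if_congr (hcond z) rfl rfl, mul_ite, mul_zero]]
        rw [Finset.sum_ite_eq' Finset.univ u (fun z => D k z * ((q : ℂ) - 1) ^ r)]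
        rw [if_pos (Finset.mem_univ u)]
      rw [Finset.prod_congr rfl fun k _ => hZ k, Finset.prod_mul_distrib,
        Finset.prod_const, ← pow_mul, Finset.card_univ, Fintype.card_fin,
        mul_comm (∏ k : Fin (d - r - 1), D k u)]
    · push_neg at hN
      obtain ⟨s₀, hs₀⟩ := hN
      have hC0 : C₀ u = 0 := by
        rw [hC₀]
        exact mul_eq_zero_of_left
          (Finset.prod_eq_zero (Finset.mem_univ s₀) (by simp [jp, hs₀])) _
      rw [hC0, zero_mul, zero_mul]
  -- Step 3: assemble
  rw [hJH, Finset.mul_sum]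
  calc (∑ u : Fin r → F, ((q : ℂ) - 1) ^ (r * (d - r - 1)) *
          ((∏ s, jp χ (a (er s)) (u s)) * ∏ k : Fin (d - r), jp χ (a (ek k)) (L k u)))
      = ∑ u : Fin r → F, C₀ u *
          (((q : ℂ) - 1) ^ (r * (d - r - 1)) * ∏ k : Fin (d - r - 1), D k u) := by
        refine Finset.sum_congr rfl fun u _ => ?_
        rw [prod_split hmn (fun k : Fin (d - r) => jp χ (a (ek k)) (L k u))]
        simp only [hC₀, hD]
        ring
    _ = ∑ u : Fin r → F, ∑ Z : Fin (d - r - 1) → Fin r → F,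
          ∑ I : Fin (d - r - 1) → Fin r → Fin (q - 1),
          ((∏ s, jp χ ((∑ k : Fin (d - r - 1), ((I k s : ℤ))) + a (er s)) (u s)) *
              jp χ (a (ek ⟨0, by omega⟩)) (L ⟨0, by omega⟩ u)) *
            ∏ k : Fin (d - r - 1), (∏ s, jp χ (-(I k s : ℤ)) (Z k s)) * D k (Z k) :=
        Finset.sum_congr rfl fun u _ => (inner u).symm
    _ = ∑ I : Fin (d - r - 1) → Fin r → Fin (q - 1), ∑ u : Fin r → F,
          ∑ Z : Fin (d - r - 1) → Fin r → F,
          ((∏ s, jp χ ((∑ k : Fin (d - r - 1), ((I k s : ℤ))) + a (er s)) (u s)) *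
              jp χ (a (ek ⟨0, by omega⟩)) (L ⟨0, by omega⟩ u)) *
            ∏ k : Fin (d - r - 1), (∏ s, jp χ (-(I k s : ℤ)) (Z k s)) * D k (Z k) := by
        rw [Finset.sum_congr rfl fun u (_ : u ∈ Finset.univ) => Finset.sum_comm]
        exact Finset.sum_comm
    _ = ∑ I : Fin (d - r - 1) → Fin r → Fin (q - 1),
        Jom χ (A ⟨0, by omega⟩) (c₀ ⟨0, by omega⟩)
            (fun s => (∑ k : Fin (d - r - 1), ((I k s : ℤ))) + a (er s))
            (a (ek ⟨0, by omega⟩)) *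
          ∏ k : Fin (d - r - 1),
            Jom χ (A ⟨k.val + 1, by omega⟩) (c₀ ⟨k.val + 1, by omega⟩)
              (fun s => -(I k s : ℤ)) (a (ek ⟨k.val + 1, by omega⟩)) := by
        refine Finset.sum_congr rfl fun I _ => ?_
        have h1 : (∏ k : Fin (d - r - 1),
            Jom χ (A ⟨k.val + 1, by omega⟩) (c₀ ⟨k.val + 1, by omega⟩)
              (fun s => -(I k s : ℤ)) (a (ek ⟨k.val + 1, by omega⟩))) =
            ∑ Z : Fin (d - r - 1) → Fin r → F, ∏ k : Fin (d - r - 1),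
              (∏ s, jp χ (-(I k s : ℤ)) (Z k s)) * D k (Z k) :=
          prod_sum_comm (fun (k : Fin (d - r - 1)) (z : Fin r → F) =>
            (∏ s, jp χ (-(I k s : ℤ)) (z s)) * D k z)
        rw [h1]
        exact (Finset.sum_mul_sum Finset.univ Finset.univ _ _).symm
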